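/- arXiv:2306.01233 — 4 statements merged into one kernel-verified Lean document; each statement's English description precedes it below -/
import Mathlib

section
/- Let f : {−1,1}ⁿ → [−1,1] with E_x[|f(x)|] = α. Then for every ℓ ∈ ℕ, Σ_{|S|=ℓ} f̂(S)² ≤ 4α² · (2e · ln(e/α^{1/ℓ}))^ℓ, where f̂(S) = E_x[f(x)·χ_S(x)] and χ_S(x) = Π_{i∈S} x_i. -/
/-!
For `ρ ^ 2 * (2k - 1) ≤ 1` the noise operator `T_ρ`, which scales the `S`-th Fourier coefficient
by `ρ^|S|`, is `(2, 2k)`-hypercontractive: `E[(T_ρ g)^(2k)] ≤ (E[g^2])^k`. For one bit this is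
the two-point inequality
`(a + ρb)^(2k) + (a - ρb)^(2k) ≤ 2 (a^2 + b^2)^k`, which compares binomial coefficients via
`C(2k, 2j) ≤ C(k, j) (2k - 1)^j`; Minkowski's inequality in `L^k` tensorises it over the bits.

Let `g` be the level-`ℓ` part of `f` and `W = E[g^2] = E[f g]`. Since `|f| ≤ 1`, Hölder gives
`W^(2k) ≤ α^(2k-1) E[g^(2k)]`, and hypercontractivity applied to `g = T_ρ (ρ^(-ℓ) g)` gives
`E[g^(2k)] ≤ ((2k - 1)^ℓ W)^k`, so `W^k ≤ α^(2k-1) (2k - 1)^(ℓk)`. Choosing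
`k = ⌈L⌉` with `L = ln(e / α^(1/ℓ))` and using `(2L + 1) e^(1 - 1/L) ≤ 2eL` yields
`W ≤ α^2 (2eL)^ℓ`.
-/

open Finset Real

theorem Nat.choose_two_mul_le_choose_mul_pow (k : ℕ) :
    ∀ j, (2 * k).choose (2 * j) ≤ k.choose j * (2 * k - 1) ^ j
  | 0 => by simp
  | j + 1 => by
    rcases lt_or_ge k (j + 1) with hkj | hjk
    · rw [Nat.choose_eq_zero_of_lt (by omega)]
      exact Nat.zero_le _
    obtain ⟨a, rfl⟩ : ∃ a, k = j + 1 + a := ⟨k - (j + 1), by omega⟩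
    have ih := Nat.choose_two_mul_le_choose_mul_pow (j + 1 + a) j
    have r1 := Nat.choose_succ_right_eq (2 * (j + 1 + a)) (2 * j)
    have r2 := Nat.choose_succ_right_eq (2 * (j + 1 + a)) (2 * j + 1)
    have r3 := Nat.choose_succ_right_eq (j + 1 + a) j
    rw [show 2 * (j + 1 + a) - 2 * j = 2 * a + 2 by omega] at r1
    rw [show 2 * (j + 1 + a) - (2 * j + 1) = 2 * a + 1 by omega] at r2
    rw [show j + 1 + a - j = a + 1 by omega] at r3
    rw [show 2 * (j + 1 + a) - 1 = 2 * j + 2 * a + 1 by omega] at ih ⊢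
    rw [show 2 * (j + 1) = 2 * j + 1 + 1 by ring]
    set P := (2 * j + 2 * a + 1) ^ j
    set C := (j + 1 + a).choose (j + 1)
    -- Going from `j` to `j + 1` multiplies the left side by `(2k-2j)(2k-2j-1) / ((2j+1)(2j+2))`
    -- and `C(k, j)` by `(k-j) / (j+1)`; the quotient `(2k-2j-1) / (2j+1)` is at most `2k - 1`.
    refine Nat.le_of_mul_le_mul_right (c := (2 * j + 1) * (2 * j + 2)) ?_ (by positivity)
    calc (2 * (j + 1 + a)).choose (2 * j + 1 + 1) * ((2 * j + 1) * (2 * j + 2))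
        = (2 * (j + 1 + a)).choose (2 * j) * ((2 * a + 2) * (2 * a + 1)) := by
          linear_combination (2 * j + 1) * r2 + (2 * a + 1) * r1
      _ ≤ (j + 1 + a).choose j * P * ((2 * a + 2) * (2 * a + 1)) := Nat.mul_le_mul_right _ ih
      _ = 2 * (C * (j + 1)) * P * (2 * a + 1) := by rw [r3]; ring
      _ ≤ 2 * (C * (j + 1)) * P * ((2 * j + 2 * a + 1) * (2 * j + 1)) := by gcongr; nlinarith
      _ = C * (2 * j + 2 * a + 1) ^ (j + 1) * ((2 * j + 1) * (2 * j + 2)) := by ring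

theorem Finset.sum_range_two_mul_add_one {M : Type*} [AddCommMonoid M] (g : ℕ → M) (k : ℕ) :
    ∑ m ∈ range (2 * k + 1), g m =
      ∑ j ∈ range (k + 1), g (2 * j) + ∑ j ∈ range k, g (2 * j + 1) := by
  induction k with
  | zero => simp
  | succ k ih =>
    rw [show 2 * (k + 1) + 1 = 2 * k + 1 + 1 + 1 by ring, sum_range_succ g (2 * k + 1 + 1),
      sum_range_succ g (2 * k + 1), ih, sum_range_succ _ (k + 1),
      sum_range_succ (fun j => g (2 * j + 1)) k, show 2 * (k + 1) = 2 * k + 1 + 1 by ring]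
    abel

theorem add_pow_two_mul_add_sub_pow_two_mul {R : Type*} [CommRing R] (a c : R) (k : ℕ) :
    (a + c) ^ (2 * k) + (a - c) ^ (2 * k) =
      2 * ∑ j ∈ range (k + 1), ((2 * k).choose (2 * j) : R) * a ^ (2 * (k - j)) * c ^ (2 * j) := by
  rw [add_comm a, sub_eq_neg_add, add_pow, add_pow, ← sum_add_distrib, sum_range_two_mul_add_one,
    mul_sum]
  have hodd : ∀ j, (-c) ^ (2 * j + 1) = -c ^ (2 * j + 1) := fun j =>
    (odd_two_mul_add_one j).neg_pow c
  simp only [hodd, Even.neg_pow (even_two_mul _)]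
  rw [sum_eq_zero (s := range k) fun j _ => by ring, add_zero]
  refine sum_congr rfl fun j hj => ?_
  rw [show 2 * k - 2 * j = 2 * (k - j) by omega]
  ring

theorem add_mul_pow_add_sub_mul_pow_le {k : ℕ} {ρ : ℝ} (hρ : ((2 * k - 1 : ℕ) : ℝ) * ρ ^ 2 ≤ 1)
    (a b : ℝ) : (a + ρ * b) ^ (2 * k) + (a - ρ * b) ^ (2 * k) ≤ 2 * (a ^ 2 + b ^ 2) ^ k := by
  rw [add_pow_two_mul_add_sub_pow_two_mul, add_comm (a ^ 2), add_pow]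
  refine mul_le_mul_of_nonneg_left (sum_le_sum fun j _ => ?_) zero_le_two
  have hcoeff : ((2 * k).choose (2 * j) : ℝ) * (ρ ^ 2) ^ j ≤ k.choose j :=
    calc ((2 * k).choose (2 * j) : ℝ) * (ρ ^ 2) ^ j
        ≤ (k.choose j * ((2 * k - 1 : ℕ) : ℝ) ^ j) * (ρ ^ 2) ^ j := by
          gcongr; exact_mod_cast Nat.choose_two_mul_le_choose_mul_pow k j
      _ = k.choose j * (((2 * k - 1 : ℕ) : ℝ) * ρ ^ 2) ^ j := by ring
      _ ≤ k.choose j := by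
          refine mul_le_of_le_one_right (Nat.cast_nonneg _) (pow_le_one₀ (by positivity) hρ)
  calc ((2 * k).choose (2 * j) : ℝ) * a ^ (2 * (k - j)) * (ρ * b) ^ (2 * j)
      = ((2 * k).choose (2 * j) * (ρ ^ 2) ^ j) * ((b ^ 2) ^ j * (a ^ 2) ^ (k - j)) := by ring
    _ ≤ k.choose j * ((b ^ 2) ^ j * (a ^ 2) ^ (k - j)) := by gcongr
    _ = (b ^ 2) ^ j * (a ^ 2) ^ (k - j) * k.choose j := by ring

theorem sum_add_pow_le_of_sum_pow_le {κ : Type*} {s : Finset κ} {u v : κ → ℝ}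
    (hu : ∀ i ∈ s, 0 ≤ u i) (hv : ∀ i ∈ s, 0 ≤ v i) {N p q : ℝ} (hN : 0 ≤ N) (hp : 0 ≤ p)
    (hq : 0 ≤ q) {k : ℕ} (hU : ∑ i ∈ s, u i ^ k ≤ N * p ^ k)
    (hV : ∑ i ∈ s, v i ^ k ≤ N * q ^ k) :
    ∑ i ∈ s, (u i + v i) ^ k ≤ N * (p + q) ^ k := by
  rcases Nat.eq_zero_or_pos k with rfl | hk
  · simpa using hU
  have hk0 : k ≠ 0 := hk.ne'
  have root_le : ∀ {X c : ℝ}, 0 ≤ X → 0 ≤ c → X ≤ N * c ^ k →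
      X ^ (k⁻¹ : ℝ) ≤ N ^ (k⁻¹ : ℝ) * c := by
    intro X c hX hc hXc
    rw [← Real.pow_rpow_inv_natCast hc hk0, ← Real.mul_rpow hN (by positivity)]
    exact Real.rpow_le_rpow hX hXc (by positivity)
  have hmink := Real.Lp_add_le_of_nonneg s (p := k) (by exact_mod_cast hk) hu hv
  simp only [Real.rpow_natCast, one_div] at hmink
  have hsum : 0 ≤ ∑ i ∈ s, (u i + v i) ^ k := sum_nonneg fun i hi => by
    have := hu i hi; have := hv i hi; positivity
  calc ∑ i ∈ s, (u i + v i) ^ k = ((∑ i ∈ s, (u i + v i) ^ k) ^ (k⁻¹ : ℝ)) ^ k :=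
        (Real.rpow_inv_natCast_pow hsum hk0).symm
    _ ≤ (N ^ (k⁻¹ : ℝ) * p + N ^ (k⁻¹ : ℝ) * q) ^ k := by
        gcongr
        exact hmink.trans (add_le_add
          (root_le (sum_nonneg fun i hi => pow_nonneg (hu i hi) k) hp hU)
          (root_le (sum_nonneg fun i hi => pow_nonneg (hv i hi) k) hq hV))
    _ = N * (p + q) ^ k := by
        rw [← mul_add, mul_pow, Real.rpow_inv_natCast_pow hN hk0]

theorem pow_sum_mul_le_pow_sum_mul_sum_mul_pow {κ : Type*} {s : Finset κ} {w z : κ → ℝ}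
    (hw : ∀ i ∈ s, 0 ≤ w i) (hz : ∀ i ∈ s, 0 ≤ z i) (n : ℕ) :
    (∑ i ∈ s, w i * z i) ^ (n + 1) ≤ (∑ i ∈ s, w i) ^ n * ∑ i ∈ s, w i * z i ^ (n + 1) := by
  rcases (sum_nonneg hw).eq_or_lt with hS | hS
  · have hw0 : ∀ i ∈ s, w i = 0 := (sum_eq_zero_iff_of_nonneg hw).mp hS.symm
    have hsum0 : ∀ y : κ → ℝ, ∑ i ∈ s, w i * y i = 0 := fun y =>
      sum_eq_zero fun i hi => by rw [hw0 i hi, zero_mul]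
    rw [hsum0, hsum0, zero_pow n.succ_ne_zero, mul_zero]
  have hmean := Real.pow_arith_mean_le_arith_mean_pow s (fun i => w i / ∑ j ∈ s, w j) z
    (fun i hi => div_nonneg (hw i hi) hS.le) (by rw [← sum_div, div_self hS.ne']) hz (n + 1)
  simp only [div_mul_eq_mul_div, ← sum_div, div_pow] at hmean
  rw [div_le_div_iff₀ (by positivity) hS] at hmean
  refine le_of_mul_le_mul_right ?_ hS
  calc (∑ i ∈ s, w i * z i) ^ (n + 1) * ∑ i ∈ s, w i
      ≤ (∑ i ∈ s, w i * z i ^ (n + 1)) * (∑ j ∈ s, w j) ^ (n + 1) := hmean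
    _ = (∑ i ∈ s, w i) ^ n * (∑ i ∈ s, w i * z i ^ (n + 1)) * ∑ i ∈ s, w i := by ring

theorem abs_sum_mul_pow_le {κ : Type*} {s : Finset κ} {f g : κ → ℝ} (hf : ∀ i ∈ s, |f i| ≤ 1)
    (n : ℕ) : |∑ i ∈ s, f i * g i| ^ (n + 1) ≤ (∑ i ∈ s, |f i|) ^ n * ∑ i ∈ s, |g i| ^ (n + 1) :=
  calc |∑ i ∈ s, f i * g i| ^ (n + 1) ≤ (∑ i ∈ s, |f i| * |g i|) ^ (n + 1) := by
        gcongr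
        simpa only [abs_mul] using abs_sum_le_sum_abs (fun i => f i * g i) s
    _ ≤ (∑ i ∈ s, |f i|) ^ n * ∑ i ∈ s, |f i| * |g i| ^ (n + 1) :=
        pow_sum_mul_le_pow_sum_mul_sum_mul_pow (fun _ _ => abs_nonneg _)
          (fun _ _ => abs_nonneg _) n
    _ ≤ (∑ i ∈ s, |f i|) ^ n * ∑ i ∈ s, |g i| ^ (n + 1) := by
        gcongr with i hi
        exact mul_le_of_le_one_left (by positivity) (hf i hi)

theorem two_mul_add_one_mul_exp_le {L : ℝ} (hL : 0 < L) :
    (2 * L + 1) * exp (1 - 1 / L) ≤ 2 * exp 1 * L := by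
  have hlin : 2 * L + 1 ≤ 2 * L * exp (1 / L) :=
    calc 2 * L + 1 ≤ 2 * L * (1 / L + 1) := by field_simp; linarith
      _ ≤ 2 * L * exp (1 / L) := by gcongr; exact add_one_le_exp _
  rw [sub_eq_add_neg, exp_add, exp_neg]
  calc (2 * L + 1) * (exp 1 * (exp (1 / L))⁻¹) = exp 1 * ((2 * L + 1) / exp (1 / L)) := by ring
    _ ≤ exp 1 * (2 * L) := by gcongr; rwa [div_le_iff₀ (exp_pos _)]
    _ = 2 * exp 1 * L := by ring

theorem le_sq_mul_two_exp_log_pow_of_forall_pow_le {α W : ℝ} {ℓ : ℕ} (hℓ : ℓ ≠ 0)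
    (hα0 : 0 ≤ α) (hα1 : α ≤ 1)
    (h : ∀ k : ℕ, k ≠ 0 → W ^ k ≤ α ^ (2 * k - 1) * (((2 * k - 1 : ℕ) : ℝ) ^ ℓ) ^ k) :
    W ≤ α ^ 2 * (2 * exp 1 * log (exp 1 / α ^ ((1 : ℝ) / ℓ))) ^ ℓ := by
  rcases hα0.eq_or_lt with rfl | hα
  · simpa using h 1 one_ne_zero
  set L := log (exp 1 / α ^ ((1 : ℝ) / ℓ))
  have hlogα : log α = ℓ * (1 - L) := by
    simp only [L, log_div (exp_ne_zero 1) (rpow_pos_of_pos hα _).ne', log_exp, log_rpow hα]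
    field_simp
    ring
  have hL : 1 ≤ L := by
    have : log α ≤ 0 := log_nonpos hα0 hα1
    have : (0 : ℝ) < ℓ := by positivity
    nlinarith
  set k := ⌈L⌉₊
  have hk : k ≠ 0 := (Nat.ceil_pos.mpr (by linarith)).ne'
  have hkL : L ≤ k := Nat.le_ceil L
  have hm : ((2 * k - 1 : ℕ) : ℝ) ≤ 2 * L + 1 := by
    have := Nat.ceil_lt_add_one (by linarith : 0 ≤ L)
    rw [Nat.cast_sub (by omega)]
    push_cast
    linarith
  have hgain : 1 ≤ α * exp (1 - 1 / L) ^ (ℓ * k) := by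
    rw [← exp_nat_mul, ← exp_log hα, ← exp_add, one_le_exp_iff, hlogα]
    have : L - 1 ≤ k * (1 - 1 / L) := by
      calc L - 1 = L * (1 - 1 / L) := by field_simp
        _ ≤ k * (1 - 1 / L) := by gcongr; rw [sub_nonneg, div_le_one (by linarith)]; exact hL
    push_cast
    nlinarith [(Nat.cast_nonneg ℓ : (0 : ℝ) ≤ ℓ)]
  refine le_of_pow_le_pow_left₀ hk (by positivity) ((h k hk).trans ?_)
  calc α ^ (2 * k - 1) * (((2 * k - 1 : ℕ) : ℝ) ^ ℓ) ^ k
      ≤ α ^ (2 * k - 1) * (((2 * k - 1 : ℕ) : ℝ) ^ ℓ) ^ k * (α * exp (1 - 1 / L) ^ (ℓ * k)) :=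
        le_mul_of_one_le_right (by positivity) hgain
    _ = α ^ (2 * k - 1 + 1) * (((2 * k - 1 : ℕ) : ℝ) * exp (1 - 1 / L)) ^ (ℓ * k) := by ring
    _ ≤ α ^ (2 * k) * ((2 * L + 1) * exp (1 - 1 / L)) ^ (ℓ * k) := by
        rw [Nat.sub_add_cancel (by omega)]
        gcongr
    _ ≤ α ^ (2 * k) * (2 * exp 1 * L) ^ (ℓ * k) := by
        gcongr ?_ * ?_ ^ _
        exact two_mul_add_one_mul_exp_le (by linarith)
    _ = (α ^ 2 * (2 * exp 1 * L) ^ ℓ) ^ k := by ring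

namespace BooleanCube

variable {ι : Type*}

def walsh (S : Finset ι) (x : ι → Bool) : ℝ := ∏ i ∈ S, if x i then -1 else 1

theorem walsh_insert [DecidableEq ι] {a : ι} {S : Finset ι} (ha : a ∉ S) (x : ι → Bool) :
    walsh (insert a S) x = (if x a then -1 else 1) * walsh S x :=
  prod_insert ha

theorem walsh_update_of_notMem [DecidableEq ι] {a : ι} {S : Finset ι} (ha : a ∉ S)
    (x : ι → Bool) (b : Bool) : walsh S (Function.update x a b) = walsh S x :=
  prod_congr rfl fun i hi => by rw [Function.update_of_ne (ne_of_mem_of_not_mem hi ha)]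

variable [Fintype ι] [DecidableEq ι]

noncomputable def fourierCoeff (f : (ι → Bool) → ℝ) (S : Finset ι) : ℝ :=
  (∑ x, f x * walsh S x) / 2 ^ Fintype.card ι

noncomputable def levelWeight (f : (ι → Bool) → ℝ) (ℓ : ℕ) : ℝ :=
  ∑ S with #S = ℓ, fourierCoeff f S ^ 2

theorem levelWeight_nonneg (f : (ι → Bool) → ℝ) (ℓ : ℕ) : 0 ≤ levelWeight f ℓ :=
  sum_nonneg fun _ _ => sq_nonneg _

theorem sum_add_sign_mul_pow_le {k : ℕ} {ρ : ℝ} (hρ : ((2 * k - 1 : ℕ) : ℝ) * ρ ^ 2 ≤ 1) (a : ι)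
    {A B : (ι → Bool) → ℝ} (hA : ∀ x b, A (Function.update x a b) = A x)
    (hB : ∀ x b, B (Function.update x a b) = B x) :
    ∑ x, (A x + ρ * ((if x a then -1 else 1) * B x)) ^ (2 * k) ≤
      ∑ x, (A x ^ 2 + B x ^ 2) ^ k := by
  set F : (ι → Bool) → ℝ := fun x => (A x + ρ * ((if x a then -1 else 1) * B x)) ^ (2 * k)
  let flip : Equiv.Perm (ι → Bool) :=
    Function.Involutive.toPerm (fun x => Function.update x a (!x a)) fun x => by simp
  have hflip : ∀ x, F (flip x) = (A x - ρ * ((if x a then -1 else 1) * B x)) ^ (2 * k) := by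
    intro x
    change (A (Function.update x a (!x a)) +
      ρ * ((if Function.update x a (!x a) a then -1 else 1) * B (Function.update x a (!x a)))) ^
        (2 * k) = _
    rw [hA, hB, Function.update_self]
    cases x a <;>
      simp only [Bool.not_false, Bool.not_true, Bool.false_eq_true, if_true, if_false] <;> ring
  have hpair : 2 * ∑ x, F x = ∑ x, (F x + F (flip x)) := by
    rw [sum_add_distrib, Equiv.sum_comp flip F, two_mul]
  have hle : ∑ x, (F x + F (flip x)) ≤ 2 * ∑ x, (A x ^ 2 + B x ^ 2) ^ k := by
    rw [mul_sum]
    refine sum_le_sum fun x _ => ?_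
    rw [hflip]
    calc F x + (A x - ρ * ((if x a then -1 else 1) * B x)) ^ (2 * k)
        ≤ 2 * (A x ^ 2 + ((if x a then -1 else 1) * B x) ^ 2) ^ k :=
          add_mul_pow_add_sub_mul_pow_le hρ _ _
      _ = 2 * (A x ^ 2 + B x ^ 2) ^ k := by cases x a <;> simp
  linarith

theorem sum_noise_pow_le {k : ℕ} {ρ : ℝ} (hρ : ((2 * k - 1 : ℕ) : ℝ) * ρ ^ 2 ≤ 1) (I : Finset ι)
    (c : Finset ι → ℝ) :
    ∑ x, (∑ S ∈ I.powerset, ρ ^ #S * c S * walsh S x) ^ (2 * k) ≤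
      2 ^ Fintype.card ι * (∑ S ∈ I.powerset, c S ^ 2) ^ k := by
  induction I using Finset.induction_on generalizing c with
  | empty => simp [walsh, pow_mul]
  | insert a I ha ih =>
    have hsplit : ∀ x, ∑ S ∈ (insert a I).powerset, ρ ^ #S * c S * walsh S x =
        (∑ S ∈ I.powerset, ρ ^ #S * c S * walsh S x) + ρ * ((if x a then -1 else 1) *
          ∑ S ∈ I.powerset, ρ ^ #S * c (insert a S) * walsh S x) := by
      intro x
      rw [sum_powerset_insert ha, mul_sum, mul_sum]
      congr 1
      refine sum_congr rfl fun S hS => ?_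
      have haS : a ∉ S := fun h => ha (mem_powerset.mp hS h)
      rw [card_insert_of_notMem haS, walsh_insert haS]
      ring
    have hinv : ∀ (y : Finset ι → ℝ) x b,
        ∑ S ∈ I.powerset, ρ ^ #S * y S * walsh S (Function.update x a b) =
          ∑ S ∈ I.powerset, ρ ^ #S * y S * walsh S x := fun y x b =>
      sum_congr rfl fun S hS => by rw [walsh_update_of_notMem fun h => ha (mem_powerset.mp hS h)]
    simp only [hsplit]
    refine (sum_add_sign_mul_pow_le hρ a (hinv c) (hinv _)).trans ?_
    rw [sum_powerset_insert ha]
    refine sum_add_pow_le_of_sum_pow_le (fun _ _ => sq_nonneg _) (fun _ _ => sq_nonneg _)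
      (by positivity) (sum_nonneg fun _ _ => sq_nonneg _) (sum_nonneg fun _ _ => sq_nonneg _) ?_ ?_
    · simpa only [← pow_mul] using ih c
    · simpa only [← pow_mul] using ih fun S => c (insert a S)

theorem sum_homogeneous_pow_le {k : ℕ} (hk : k ≠ 0) (ℓ : ℕ) (d : Finset ι → ℝ) :
    ∑ x, (∑ S with #S = ℓ, d S * walsh S x) ^ (2 * k) ≤
      2 ^ Fintype.card ι * (((2 * k - 1 : ℕ) : ℝ) ^ ℓ * ∑ S with #S = ℓ, d S ^ 2) ^ k := by
  set m : ℝ := ((2 * k - 1 : ℕ) : ℝ)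
  have hm : 0 < m := by simp only [m]; exact_mod_cast (by omega : 0 < 2 * k - 1)
  have hρ : m * ((√m)⁻¹) ^ 2 ≤ 1 := by
    rw [inv_pow, Real.sq_sqrt hm.le, mul_inv_cancel₀ hm.ne']
  set c : Finset ι → ℝ := fun S => if #S = ℓ then √m ^ ℓ * d S else 0
  have hpart : ∀ x, ∑ S ∈ univ.powerset, (√m)⁻¹ ^ #S * c S * walsh S x =
      ∑ S with #S = ℓ, d S * walsh S x := by
    intro x
    rw [powerset_univ, sum_filter]
    refine sum_congr rfl fun S _ => ?_
    by_cases hS : #S = ℓ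
    · simp only [c, if_pos hS, hS, inv_pow, if_true]
      field_simp
    · simp only [c, if_neg hS, mul_zero, zero_mul]
  have hsq : ∑ S ∈ univ.powerset, c S ^ 2 = m ^ ℓ * ∑ S with #S = ℓ, d S ^ 2 := by
    rw [powerset_univ, sum_filter, mul_sum]
    refine sum_congr rfl fun S _ => ?_
    by_cases hS : #S = ℓ
    · simp only [c, if_pos hS]
      rw [mul_pow, ← pow_mul, mul_comm ℓ 2, pow_mul, Real.sq_sqrt hm.le]
    · simp only [c, if_neg hS, ne_eq, OfNat.ofNat_ne_zero, not_false_eq_true, zero_pow,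
        mul_zero]
  simpa only [hpart, hsq] using sum_noise_pow_le hρ univ c

theorem levelWeight_pow_le (f : (ι → Bool) → ℝ) (hf : ∀ x, |f x| ≤ 1) (ℓ : ℕ)
    {k : ℕ} (hk : k ≠ 0) :
    levelWeight f ℓ ^ k ≤
      ((∑ x, |f x|) / 2 ^ Fintype.card ι) ^ (2 * k - 1) * (((2 * k - 1 : ℕ) : ℝ) ^ ℓ) ^ k := by
  set N : ℝ := 2 ^ Fintype.card ι
  have hN : 0 < N := by positivity
  set fh := fourierCoeff f
  set W := levelWeight f ℓ
  set M : ℝ := ((2 * k - 1 : ℕ) : ℝ) ^ ℓ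
  set α := (∑ x, |f x|) / N
  set g : (ι → Bool) → ℝ := fun x => ∑ S with #S = ℓ, fh S * walsh S x
  have hcorr : ∑ x, f x * g x = N * W := by
    simp only [g, W, levelWeight, mul_sum]
    rw [sum_comm]
    refine sum_congr rfl fun S _ => ?_
    calc ∑ x, f x * (fh S * walsh S x) = fh S * ∑ x, f x * walsh S x := by
          rw [mul_sum]; exact sum_congr rfl fun x _ => by ring
      _ = N * fh S ^ 2 := by simp only [fh, fourierCoeff, N]; field_simp
  have hhyper : ∑ x, g x ^ (2 * k) ≤ N * (M * W) ^ k := sum_homogeneous_pow_le hk ℓ fh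
  have h2k : 2 * k - 1 + 1 = 2 * k := Nat.sub_add_cancel (by omega)
  have hholder : (N * W) ^ (2 * k) ≤ (N * α) ^ (2 * k - 1) * ∑ x, g x ^ (2 * k) := by
    have := abs_sum_mul_pow_le (s := univ) (g := g) (fun x _ => hf x) (2 * k - 1)
    rw [h2k, (even_two_mul k).pow_abs, hcorr] at this
    rw [mul_div_cancel₀ _ hN.ne']
    simpa only [(even_two_mul k).pow_abs] using this
  have hkey : N ^ (2 * k) * W ^ k * W ^ k ≤ N ^ (2 * k) * (α ^ (2 * k - 1) * M ^ k) * W ^ k :=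
    calc N ^ (2 * k) * W ^ k * W ^ k = (N * W) ^ (2 * k) := by ring
      _ ≤ (N * α) ^ (2 * k - 1) * (N * (M * W) ^ k) := hholder.trans (by gcongr)
      _ = N ^ (2 * k - 1 + 1) * (α ^ (2 * k - 1) * M ^ k) * W ^ k := by ring
      _ = N ^ (2 * k) * (α ^ (2 * k - 1) * M ^ k) * W ^ k := by rw [h2k]
  have hW0 : 0 ≤ W := levelWeight_nonneg f ℓ
  rcases hW0.eq_or_lt with hW | hW
  · rw [← hW, zero_pow hk]
    positivity
  · exact le_of_mul_le_mul_left (le_of_mul_le_mul_right hkey (by positivity)) (by positivity)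

theorem levelWeight_zero_le (f : (ι → Bool) → ℝ) :
    levelWeight f 0 ≤ ((∑ x, |f x|) / 2 ^ Fintype.card ι) ^ 2 := by
  simp only [levelWeight, fourierCoeff, card_eq_zero, filter_eq', mem_univ, if_true,
    sum_singleton, walsh, prod_empty, mul_one]
  rw [div_pow, div_pow]
  gcongr ?_ / _
  exact sq_le_sq.mpr ((abs_sum_le_sum_abs f univ).trans_eq (abs_of_nonneg (by positivity)).symm)

end BooleanCube

/-- Level-`ℓ` inequality: for `f : {-1,1}ⁿ → [-1,1]` with `E|f| = α`, the level-`ℓ`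
Fourier weight satisfies `∑_{|S| = ℓ} f̂(S)² ≤ 4α² (2e ln(e / α^(1/ℓ)))^ℓ`. -/
theorem level_l_inequality (n : ℕ) (f : (Fin n → Bool) → ℝ)
    (hf : ∀ x, |f x| ≤ 1) (α : ℝ) (hα : α = (∑ x, |f x|) / 2 ^ n) (ℓ : ℕ) :
    ∑ S ∈ (Finset.univ : Finset (Finset (Fin n))).filter (fun S => S.card = ℓ),
      ((∑ x, f x * ∏ i ∈ S, (if x i then (-1 : ℝ) else 1)) / 2 ^ n) ^ 2
    ≤ 4 * α ^ 2 *
        (2 * Real.exp 1 * Real.log (Real.exp 1 / α ^ ((1 : ℝ) / (ℓ : ℝ)))) ^ ℓ := by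
  suffices h : BooleanCube.levelWeight f ℓ ≤ 4 * α ^ 2 *
      (2 * Real.exp 1 * Real.log (Real.exp 1 / α ^ ((1 : ℝ) / (ℓ : ℝ)))) ^ ℓ by
    simpa only [BooleanCube.levelWeight, BooleanCube.fourierCoeff, BooleanCube.walsh,
      Fintype.card_fin] using h
  have hα0 : 0 ≤ α := hα ▸ by positivity
  have hα1 : α ≤ 1 := by
    rw [hα, div_le_one (by positivity)]
    calc ∑ x, |f x| ≤ ∑ _x : Fin n → Bool, (1 : ℝ) := sum_le_sum fun x _ => hf x
      _ = 2 ^ n := by simp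
  rcases eq_or_ne ℓ 0 with rfl | hℓ
  · have h := BooleanCube.levelWeight_zero_le f
    rw [Fintype.card_fin, ← hα] at h
    rw [pow_zero, mul_one]
    exact h.trans (by nlinarith [sq_nonneg α])
  have h := le_sq_mul_two_exp_log_pow_of_forall_pow_le hℓ hα0 hα1 fun k hk => by
    simpa only [Fintype.card_fin, ← hα] using BooleanCube.levelWeight_pow_le f hf ℓ hk
  rw [mul_assoc]
  exact h.trans (le_mul_of_one_le_left ((BooleanCube.levelWeight_nonneg f ℓ).trans h) (by norm_num))
end

section
/- Let E_z(x) and F_z(y) be positive semidefinite matrices (indexed by z ∈ {−1,1}^c) satisfying Σ_z E_z(x) ⊗ F_z(y) = I for all x, y ∈ {−1,1}ⁿ. Fix indices i ≠ j. Define e_z[i,j] = E_x[|E_z(x)[i,j]|], f_z[i,j] = E_y[|F_z(y)[i,j]|], and e_z[i,i] = E_x[E_z(x)[i,i]], f_z[i,i] = E_y[F_z(y)[i,i]]. Then Σ_z e_z[i,j]·f_z[i,j] ≤ 1. -/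
/-!
The Kronecker product `E_z(x) ⊗ F_z(y)` is positive semidefinite, so its `2 × 2` principal minor
at the indices `(i,i), (j,j)` bounds the off-diagonal entry `E_z(x)[i,j] F_z(y)[i,j]` by the
geometric, hence the arithmetic, mean of the diagonal entries `E_z(x)[i,i] F_z(y)[i,i]` and
`E_z(x)[j,j] F_z(y)[j,j]`. Summed over `z`, each of these diagonals is a diagonal entry of the
identity, so `∑_z |E_z(x)[i,j]| |F_z(y)[i,j]| ≤ 1` for all `x, y`; averaging over `x` and `y`
gives the claim.
-/

open Kronecker Finset
open scoped BigOperators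

namespace Matrix

namespace PosSemidef

variable {n : Type*} {M : Matrix n n ℝ}

theorem sq_apply_le_mul_diag (hM : M.PosSemidef) (i j : n) : M i j ^ 2 ≤ M i i * M j j := by
  classical
  have hdet := (hM.submatrix ![i, j]).det_nonneg
  rw [det_fin_two] at hdet
  have hsymm : M j i = M i j := by simpa using hM.1.apply i j
  simp only [submatrix_apply, Matrix.cons_val_zero, Matrix.cons_val_one, hsymm] at hdet
  nlinarith

theorem abs_apply_le_diag_add_diag_div_two (hM : M.PosSemidef) (i j : n) :
    |M i j| ≤ (M i i + M j j) / 2 := by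
  have hi := hM.diag_nonneg (i := i)
  have hj := hM.diag_nonneg (i := j)
  refine abs_le_of_sq_le_sq ?_ (by positivity)
  nlinarith [hM.sq_apply_le_mul_diag i j, sq_nonneg (M i i - M j j)]

theorem abs_mul_abs_le_of_kronecker [Finite n] {A B : Matrix n n ℝ} (hA : A.PosSemidef)
    (hB : B.PosSemidef) (i j : n) :
    |A i j| * |B i j| ≤ (A i i * B i i + A j j * B j j) / 2 := by
  simpa [abs_mul] using (hA.kronecker hB).abs_apply_le_diag_add_diag_div_two (i, i) (j, j)

end PosSemidef

variable {ι n : Type*} [Fintype ι] [DecidableEq n]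

theorem sum_apply_mul_apply_eq_one_of_sum_kronecker_eq_one {R : Type*} [CommSemiring R]
    {A B : ι → Matrix n n R} (h : ∑ z, A z ⊗ₖ B z = 1) (i : n) :
    ∑ z, A z i i * B z i i = 1 := by
  simpa [sum_apply, one_apply] using congrFun (congrFun h (i, i)) (i, i)

theorem sum_abs_mul_abs_le_one_of_sum_kronecker_eq_one [Finite n] {A B : ι → Matrix n n ℝ}
    (hA : ∀ z, (A z).PosSemidef) (hB : ∀ z, (B z).PosSemidef) (h : ∑ z, A z ⊗ₖ B z = 1)
    (i j : n) : ∑ z, |A z i j| * |B z i j| ≤ 1 :=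
  calc ∑ z, |A z i j| * |B z i j|
      ≤ ∑ z, (A z i i * B z i i + A z j j * B z j j) / 2 :=
        sum_le_sum fun z _ ↦ (hA z).abs_mul_abs_le_of_kronecker (hB z) i j
    _ = ((∑ z, A z i i * B z i i) + ∑ z, A z j j * B z j j) / 2 := by
        rw [← sum_div, sum_add_distrib]
    _ = 1 := by
        rw [sum_apply_mul_apply_eq_one_of_sum_kronecker_eq_one h i,
          sum_apply_mul_apply_eq_one_of_sum_kronecker_eq_one h j]
        norm_num

end Matrix

theorem sum_expect_mul_expect_le_one {γ α β : Type*} [Fintype γ] [Fintype α] [Fintype β]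
    [Nonempty α] [Nonempty β] {f : γ → α → ℝ} {g : γ → β → ℝ}
    (h : ∀ x y, ∑ z, f z x * g z y ≤ 1) :
    ∑ z, (𝔼 x, f z x) * 𝔼 y, g z y ≤ 1 := by
  simp_rw [Fintype.expect_mul_expect, ← expect_sum_comm]
  exact expect_le univ_nonempty fun x _ ↦ expect_le univ_nonempty fun y _ ↦ h x y

theorem povm_offdiag_sum_le_one_general (c n N : ℕ)
    (E F : (Fin c → Bool) → (Fin n → Bool) → Matrix (Fin N) (Fin N) ℝ)
    (hE : ∀ z x, (E z x).PosSemidef) (hF : ∀ z y, (F z y).PosSemidef)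
    (hsum : ∀ x y, ∑ z, (E z x ⊗ₖ F z y) = 1)
    (i j : Fin N) :
    ∑ z, ((∑ x, |E z x i j|) / 2 ^ n) * ((∑ y, |F z y i j|) / 2 ^ n) ≤ 1 := by
  have hcard : (Fintype.card (Fin n → Bool) : ℝ) = 2 ^ n := by simp
  simp_rw [← hcard, ← Fintype.expect_eq_sum_div_card]
  exact sum_expect_mul_expect_le_one fun x y ↦
    Matrix.sum_abs_mul_abs_le_one_of_sum_kronecker_eq_one (hE · x) (hF · y) (hsum x y) i j

/-- If `{E_z(x) ⊗ F_z(y)}_z` is a POVM (PSD and summing to the identity) for all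
inputs `x, y`, then for fixed `i ≠ j`,
`∑_z E_x[|E_z(x)[i,j]|] ⬝ E_y[|F_z(y)[i,j]|] ≤ 1`. -/
theorem povm_offdiag_sum_le_one (c n N : ℕ)
    (E F : (Fin c → Bool) → (Fin n → Bool) → Matrix (Fin N) (Fin N) ℝ)
    (hE : ∀ z x, (E z x).PosSemidef) (hF : ∀ z y, (F z y).PosSemidef)
    (hsum : ∀ x y, ∑ z, (E z x ⊗ₖ F z y) = 1)
    (i j : Fin N) (hij : i ≠ j) :
    ∑ z, ((∑ x, |E z x i j|) / 2 ^ n) * ((∑ y, |F z y i j|) / 2 ^ n) ≤ 1 :=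
  povm_offdiag_sum_le_one_general c n N E F hE hF hsum i j
end

section
/- Let x ∈ {−1,1}ⁿ be uniformly random, let M be a perfect matching on a subset of [n] with edge set {(i_1,j_1),…,(i_m,j_m)}, and define Mx ∈ {−1,1}^m by (Mx)_k = x_{i_k}·x_{j_k}. For S ⊆ [n] and w ∈ {−1,1}^m, the quantity E_x[1[Mx = w]·χ_S(x)] is nonzero if and only if M restricted to S is a perfect matching of S; and in that case it equals 2^{−m}·χ_{M(S)}(w), where M(S) ⊆ [m] is the set of edge-indices of the induced perfect matching on S. -/
open Finset

section aux
variable (n m : ℕ) (e : Fin m → Fin n × Fin n) (S : Finset (Fin n)) (w : Fin m → Bool)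

private lemma mce_key
    (hdisj : Function.Injective
      (fun p : Fin m × Bool => if p.2 then (e p.1).1 else (e p.1).2)) :
    (∑ x : Fin n → Bool,
        (if (fun k => xor (x (e k).1) (x (e k).2)) = w then (1 : ℝ) else 0) *
          ∏ i ∈ S, (if x i then (-1 : ℝ) else 1))
    = (∏ k : Fin m, ∑ p : Bool × Bool,
          (if xor p.1 p.2 = w k then (1 : ℝ) else 0) *
            ((if (e k).1 ∈ S then (if p.1 then (-1:ℝ) else 1) else 1) *
             (if (e k).2 ∈ S then (if p.2 then (-1:ℝ) else 1) else 1))) *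
      ∏ v ∈ univ \ image (fun p : Fin m × Bool => if p.2 then (e p.1).1 else (e p.1).2) univ,
        (if v ∈ S then (0 : ℝ) else 2) := by
  classical
  set emb : Fin m × Bool → Fin n := fun p => if p.2 then (e p.1).1 else (e p.1).2 with hembdef
  have hembinj : Function.Injective emb := hdisj
  set Im : Finset (Fin n) := Finset.image emb Finset.univ with hImdef
  have hemb1 : ∀ k, emb (k, true) = (e k).1 := fun k => rfl
  have hemb2 : ∀ k, emb (k, false) = (e k).2 := fun k => rfl
  set ε : Bool → ℝ := fun b => if b then (-1 : ℝ) else 1 with hε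
  set g : Fin m → Bool → Bool → ℝ := fun k a b =>
    (if xor a b = w k then (1:ℝ) else 0) *
      ((if (e k).1 ∈ S then ε a else 1) * (if (e k).2 ∈ S then ε b else 1)) with hg
  set h : Fin n → Bool → ℝ := fun v b => if v ∈ S then ε b else 1 with hh
  -- Step A : rewrite the summand
  have stepA : ∀ x : Fin n → Bool,
      (if (fun k => xor (x (e k).1) (x (e k).2)) = w then (1 : ℝ) else 0) *
          ∏ i ∈ S, (if x i then (-1 : ℝ) else 1)
      = (∏ k : Fin m, g k (x (e k).1) (x (e k).2)) * ∏ v ∈ univ \ Im, h v (x v) := by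
    intro x
    have hind : (if (fun k => xor (x (e k).1) (x (e k).2)) = w then (1 : ℝ) else 0)
        = ∏ k : Fin m, (if xor (x (e k).1) (x (e k).2) = w k then (1:ℝ) else 0) := by
      rw [Fintype.prod_boole]
      simp [funext_iff]
    have h1 : (∏ i ∈ S, (if x i then (-1 : ℝ) else 1)) = ∏ i : Fin n, h i (x i) := by
      rw [hh]
      simp only
      rw [← Finset.prod_filter (fun i => i ∈ S) (fun i => ε (x i))]
      simp [hε, Finset.filter_mem_eq_inter]
    have h2 : (∏ i : Fin n, h i (x i)) = (∏ i ∈ Im, h i (x i)) * ∏ v ∈ univ \ Im, h v (x v) := by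
      rw [← Finset.prod_sdiff (Finset.subset_univ Im), mul_comm]
    have h3 : (∏ i ∈ Im, h i (x i)) = ∏ k : Fin m,
        ((if (e k).1 ∈ S then ε (x (e k).1) else 1) *
         (if (e k).2 ∈ S then ε (x (e k).2) else 1)) := by
      rw [hImdef, Finset.prod_image (fun p _ q _ hpq => hembinj hpq)]
      rw [Fintype.prod_prod_type]
      refine Finset.prod_congr rfl fun k _ => ?_
      rw [Fintype.prod_bool]
      simp [hh, hemb1, hemb2]
    rw [hind, h1, h2, h3, ← mul_assoc, ← Finset.prod_mul_distrib]
  rw [Fintype.sum_congr _ _ stepA]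
  -- the bijection
  have hbij : Function.Bijective
      (Sum.elim emb (Subtype.val : {v : Fin n // v ∉ Im} → Fin n)) := by
    constructor
    · rintro (p | ⟨v, hv⟩) (q | ⟨u, hu⟩) hpq
      · exact congrArg Sum.inl (hembinj hpq)
      · simp only [Sum.elim_inl, Sum.elim_inr] at hpq
        exact absurd (hpq ▸ Finset.mem_image_of_mem emb (Finset.mem_univ p)) hu
      · simp only [Sum.elim_inl, Sum.elim_inr] at hpq
        exact absurd (hpq.symm ▸ Finset.mem_image_of_mem emb (Finset.mem_univ q)) hv
      · exact congrArg Sum.inr (Subtype.ext hpq)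
    · intro v
      by_cases hv : v ∈ Im
      · obtain ⟨p, -, hp⟩ := Finset.mem_image.mp hv
        exact ⟨Sum.inl p, hp⟩
      · exact ⟨Sum.inr ⟨v, hv⟩, rfl⟩
  set ψ : (Fin m × Bool) ⊕ {v : Fin n // v ∉ Im} ≃ Fin n := Equiv.ofBijective _ hbij with hψ
  have hψ1 : ∀ (k : Fin m) (b : Bool), ψ.symm (emb (k, b)) = Sum.inl (k, b) := by
    intro k b
    have : emb (k, b) = ψ (Sum.inl (k, b)) := rfl
    rw [this, Equiv.symm_apply_apply]
  have hψ2 : ∀ v : {v : Fin n // v ∉ Im}, ψ.symm (v : Fin n) = Sum.inr v := by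
    intro v
    have : (v : Fin n) = ψ (Sum.inr v) := rfl
    rw [this, Equiv.symm_apply_apply]
  -- Step B : reindex
  have stepB : (∑ x : Fin n → Bool,
        (∏ k : Fin m, g k (x (e k).1) (x (e k).2)) * ∏ v ∈ univ \ Im, h v (x v))
      = ∑ y : ((Fin m × Bool) ⊕ {v : Fin n // v ∉ Im}) → Bool,
          (∏ k : Fin m, g k (y (Sum.inl (k, true))) (y (Sum.inl (k, false)))) *
            ∏ v : {v : Fin n // v ∉ Im}, h v (y (Sum.inr v)) := by
    rw [← Equiv.sum_comp (ψ.arrowCongr (Equiv.refl Bool))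
        (fun x => (∏ k : Fin m, g k (x (e k).1) (x (e k).2)) * ∏ v ∈ univ \ Im, h v (x v))]
    refine Fintype.sum_congr _ _ fun y => ?_
    have happ : ∀ v, (ψ.arrowCongr (Equiv.refl Bool)) y v = y (ψ.symm v) := fun v => rfl
    congr 1
    · refine Finset.prod_congr rfl fun k _ => ?_
      rw [happ, happ, ← hemb1 k, ← hemb2 k, hψ1, hψ1]
    · rw [Finset.prod_subtype (univ \ Im) (p := fun v => v ∉ Im) (by simp)]
      refine Finset.prod_congr rfl fun v _ => ?_
      rw [happ, hψ2]
  rw [stepB]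
  -- Step C : split the sum
  have stepC : (∑ y : ((Fin m × Bool) ⊕ {v : Fin n // v ∉ Im}) → Bool,
          (∏ k : Fin m, g k (y (Sum.inl (k, true))) (y (Sum.inl (k, false)))) *
            ∏ v : {v : Fin n // v ∉ Im}, h v (y (Sum.inr v)))
      = (∑ u : (Fin m × Bool) → Bool, ∏ k : Fin m, g k (u (k, true)) (u (k, false))) *
          ∑ c : {v : Fin n // v ∉ Im} → Bool, ∏ v : {v : Fin n // v ∉ Im}, h v (c v) := by
    rw [← Equiv.sum_comp (Equiv.sumArrowEquivProdArrow (Fin m × Bool) {v : Fin n // v ∉ Im} Bool).symm]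
    rw [Fintype.sum_prod_type, Finset.sum_mul_sum]
    refine Fintype.sum_congr _ _ fun u => Fintype.sum_congr _ _ fun c => ?_
    simp [Equiv.sumArrowEquivProdArrow]
  rw [stepC]
  congr 1
  -- edge factor
  · refine Eq.trans (Fintype.sum_equiv
      (⟨fun u k => (u (k, true), u (k, false)),
        fun f p => if p.2 then (f p.1).1 else (f p.1).2,
        by intro u; funext p; rcases p with ⟨k, b⟩; cases b <;> rfl,
        by intro f; funext k; rfl⟩ : ((Fin m × Bool) → Bool) ≃ (Fin m → Bool × Bool))
      _ (fun f => ∏ k : Fin m, g k (f k).1 (f k).2) (fun u => rfl)) ?_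
    rw [← Fintype.piFinset_univ]
    exact Finset.sum_prod_piFinset (univ : Finset (Bool × Bool)) (fun k p => g k p.1 p.2)
  -- unmatched factor
  · rw [← Fintype.piFinset_univ, Finset.sum_prod_piFinset]
    rw [Finset.prod_subtype (univ \ Im) (p := fun v => v ∉ Im) (by simp)]
    refine Finset.prod_congr rfl fun v _ => ?_
    rw [Fintype.sum_bool]
    simp only [hh, hε]
    by_cases hv : (v : Fin n) ∈ S <;> simp [hv] <;> norm_num

end aux

/-- Let `M` be a partial matching on `[n]` given by `m` pairwise-disjoint edges
`e k = (i_k, j_k)` and let `(Mx)_k = x_{i_k} x_{j_k}` (Booleans encode `±1`, with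
multiplication given by `xor`). For `S ⊆ [n]` and `w ∈ {-1,1}^m`,
`E_x[1[Mx = w] χ_S(x)]` is nonzero iff `M` induces a perfect matching on `S`, and
in that case it equals `2^{-m} χ_{M(S)}(w)`, where `M(S)` is the set of edges of
the induced matching on `S`. -/
theorem matching_character_expectation (n m : ℕ) (e : Fin m → Fin n × Fin n)
    (hdisj : Function.Injective
      (fun p : Fin m × Bool => if p.2 then (e p.1).1 else (e p.1).2)) (S : Finset (Fin n))
    (w : Fin m → Bool) :
    ((∑ x : Fin n → Bool,
        (if (fun k => xor (x (e k).1) (x (e k).2)) = w then (1 : ℝ) else 0) *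
          ∏ i ∈ S, (if x i then (-1 : ℝ) else 1)) / 2 ^ n ≠ 0
      ↔ (∀ v ∈ S, ∃ k : Fin m, ((e k).1 = v ∨ (e k).2 = v) ∧ (e k).1 ∈ S ∧ (e k).2 ∈ S)) ∧
    ((∀ v ∈ S, ∃ k : Fin m, ((e k).1 = v ∨ (e k).2 = v) ∧ (e k).1 ∈ S ∧ (e k).2 ∈ S) →
      (∑ x : Fin n → Bool,
        (if (fun k => xor (x (e k).1) (x (e k).2)) = w then (1 : ℝ) else 0) *
          ∏ i ∈ S, (if x i then (-1 : ℝ) else 1)) / 2 ^ n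
        = ((2 : ℝ) ^ m)⁻¹ *
            ∏ k ∈ Finset.univ.filter (fun k : Fin m => (e k).1 ∈ S ∧ (e k).2 ∈ S),
              (if w k then (-1 : ℝ) else 1)) := by
  classical
  have key := mce_key n m e S w hdisj
  set emb : Fin m × Bool → Fin n := fun p => if p.2 then (e p.1).1 else (e p.1).2 with hembdef
  have hembinj : Function.Injective emb := hdisj
  set Im : Finset (Fin n) := Finset.image emb Finset.univ with hImdef
  have hemb1 : ∀ k, emb (k, true) = (e k).1 := fun k => rfl
  have hemb2 : ∀ k, emb (k, false) = (e k).2 := fun k => rfl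
  set A : Fin m → ℝ := fun k => ∑ p : Bool × Bool,
      (if xor p.1 p.2 = w k then (1 : ℝ) else 0) *
        ((if (e k).1 ∈ S then (if p.1 then (-1:ℝ) else 1) else 1) *
         (if (e k).2 ∈ S then (if p.2 then (-1:ℝ) else 1) else 1)) with hAdef
  have hA_both : ∀ k, (e k).1 ∈ S → (e k).2 ∈ S → A k = 2 * (if w k then (-1:ℝ) else 1) := by
    intro k h1 h2
    rw [hAdef]
    simp only [Fintype.sum_prod_type, Fintype.sum_bool, h1, h2, if_true]
    cases hw : w k <;> norm_num
  have hA_one : ∀ k, (e k).1 ∈ S → (e k).2 ∉ S → A k = 0 := by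
    intro k h1 h2
    rw [hAdef]
    simp only [Fintype.sum_prod_type, Fintype.sum_bool, h1, h2, if_true, if_false]
    cases hw : w k <;> norm_num
  have hA_one' : ∀ k, (e k).1 ∉ S → (e k).2 ∈ S → A k = 0 := by
    intro k h1 h2
    rw [hAdef]
    simp only [Fintype.sum_prod_type, Fintype.sum_bool, h1, h2, if_true, if_false]
    cases hw : w k <;> norm_num
  have hA_none : ∀ k, (e k).1 ∉ S → (e k).2 ∉ S → A k = 2 := by
    intro k h1 h2
    rw [hAdef]
    simp only [Fintype.sum_prod_type, Fintype.sum_bool, h1, h2, if_false]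
    cases hw : w k <;> norm_num
  have hzero : ¬ (∀ v ∈ S, ∃ k : Fin m,
        ((e k).1 = v ∨ (e k).2 = v) ∧ (e k).1 ∈ S ∧ (e k).2 ∈ S) →
      (∑ x : Fin n → Bool,
        (if (fun k => xor (x (e k).1) (x (e k).2)) = w then (1 : ℝ) else 0) *
          ∏ i ∈ S, (if x i then (-1 : ℝ) else 1)) = 0 := by
    intro hm
    push_neg at hm
    obtain ⟨v, hvS, hv⟩ := hm
    rw [key]
    by_cases hvIm : v ∈ Im
    · obtain ⟨⟨k, b⟩, -, hp⟩ := Finset.mem_image.mp hvIm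
      have hAk : A k = 0 := by
        cases b
        · have h2 : (e k).2 = v := hp
          have h2S : (e k).2 ∈ S := h2 ▸ hvS
          have h1S : (e k).1 ∉ S := fun h1S => hv k (Or.inr h2) h1S h2S
          exact hA_one' k h1S h2S
        · have h1 : (e k).1 = v := hp
          have h1S : (e k).1 ∈ S := h1 ▸ hvS
          have h2S : (e k).2 ∉ S := hv k (Or.inl h1) h1S
          exact hA_one k h1S h2S
      exact mul_eq_zero_of_left (Finset.prod_eq_zero (Finset.mem_univ k) hAk) _
    · refine mul_eq_zero_of_right _ (Finset.prod_eq_zero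
        (Finset.mem_sdiff.mpr ⟨Finset.mem_univ v, hvIm⟩) ?_)
      rw [if_pos hvS]
  have hval : (∀ v ∈ S, ∃ k : Fin m,
        ((e k).1 = v ∨ (e k).2 = v) ∧ (e k).1 ∈ S ∧ (e k).2 ∈ S) →
      (∑ x : Fin n → Bool,
        (if (fun k => xor (x (e k).1) (x (e k).2)) = w then (1 : ℝ) else 0) *
          ∏ i ∈ S, (if x i then (-1 : ℝ) else 1))
      = 2 ^ m * (∏ k ∈ Finset.univ.filter (fun k : Fin m => (e k).1 ∈ S ∧ (e k).2 ∈ S),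
          (if w k then (-1 : ℝ) else 1)) * 2 ^ (n - 2*m) := by
    intro hm
    have hiff : ∀ k : Fin m, ((e k).1 ∈ S ↔ (e k).2 ∈ S) := by
      intro k
      constructor
      · intro h1
        obtain ⟨k', hk', hS1, hS2⟩ := hm (e k).1 h1
        rcases hk' with hh | hh
        · have hkk : (k', true) = (k, true) :=
            hembinj (show emb (k', true) = emb (k, true) by rw [hemb1, hemb1, hh])
          have : k' = k := (Prod.ext_iff.mp hkk).1
          exact this ▸ hS2
        · have hkk : (k', false) = (k, true) :=
            hembinj (show emb (k', false) = emb (k, true) by rw [hemb2, hemb1, hh])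
          exact absurd (Prod.ext_iff.mp hkk).2 (by simp)
      · intro h2
        obtain ⟨k', hk', hS1, hS2⟩ := hm (e k).2 h2
        rcases hk' with hh | hh
        · have hkk : (k', true) = (k, false) :=
            hembinj (show emb (k', true) = emb (k, false) by rw [hemb1, hemb2, hh])
          exact absurd (Prod.ext_iff.mp hkk).2 (by simp)
        · have hkk : (k', false) = (k, false) :=
            hembinj (show emb (k', false) = emb (k, false) by rw [hemb2, hemb2, hh])
          have : k' = k := (Prod.ext_iff.mp hkk).1
          exact this ▸ hS1
    have hUS : ∀ v ∈ univ \ Im, v ∉ S := by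
      intro v hv hvS
      obtain ⟨k, hk, hS1, hS2⟩ := hm v hvS
      have hvIm : v ∈ Im := by
        rcases hk with hh | hh
        · exact Finset.mem_image.mpr ⟨(k, true), Finset.mem_univ _, by rw [hemb1, hh]⟩
        · exact Finset.mem_image.mpr ⟨(k, false), Finset.mem_univ _, by rw [hemb2, hh]⟩
      exact (Finset.mem_sdiff.mp hv).2 hvIm
    rw [key]
    have hprodU : (∏ v ∈ univ \ Im, (if v ∈ S then (0:ℝ) else 2)) = 2 ^ (n - 2*m) := by
      rw [Finset.prod_congr rfl (fun v hv => if_neg (hUS v hv)), Finset.prod_const]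
      congr 1
      rw [Finset.card_sdiff_of_subset (Finset.subset_univ _), Finset.card_univ,
        Finset.card_image_of_injective _ hembinj, Finset.card_univ]
      simp [Fintype.card_prod, mul_comm]
    have hAk : ∀ k, A k = 2 * (if (e k).1 ∈ S ∧ (e k).2 ∈ S then
        (if w k then (-1:ℝ) else 1) else 1) := by
      intro k
      by_cases h1 : (e k).1 ∈ S
      · have h2 := (hiff k).mp h1
        rw [hA_both k h1 h2, if_pos (⟨h1, h2⟩ : (e k).1 ∈ S ∧ (e k).2 ∈ S)]
      · have h2 : (e k).2 ∉ S := fun hc => h1 ((hiff k).mpr hc)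
        rw [hA_none k h1 h2, if_neg (fun hc => h1 hc.1), mul_one]
    rw [hprodU, Finset.prod_congr rfl (fun k _ => hAk k), Finset.prod_mul_distrib,
      Finset.prod_const, ← Finset.prod_filter, Finset.card_univ, Fintype.card_fin]
  have h2n : ((2:ℝ)) ^ n ≠ 0 := pow_ne_zero _ two_ne_zero
  have h2mle : 2 * m ≤ n := by
    have := Fintype.card_le_of_injective emb hembinj
    simpa [Fintype.card_prod, mul_comm] using this
  have hpow : (2:ℝ) ^ m * 2 ^ (n - 2*m) * 2 ^ m = 2 ^ n := by
    rw [← pow_add, ← pow_add]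
    congr 1
    omega
  constructor
  · constructor
    · intro hne
      by_contra hmm
      rw [hzero hmm, zero_div] at hne
      exact hne rfl
    · intro hm
      rw [hval hm]
      have hχ : (∏ k ∈ Finset.univ.filter (fun k : Fin m => (e k).1 ∈ S ∧ (e k).2 ∈ S),
          (if w k then (-1 : ℝ) else 1)) ≠ 0 :=
        Finset.prod_ne_zero_iff.mpr (fun k _ => by split <;> norm_num)
      exact div_ne_zero (mul_ne_zero (mul_ne_zero (pow_ne_zero _ two_ne_zero) hχ)
        (pow_ne_zero _ two_ne_zero)) h2n
  · intro hm
    rw [hval hm, ← hpow]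
    have hm0 : ((2:ℝ)) ^ m ≠ 0 := pow_ne_zero _ two_ne_zero
    have hm1 : ((2:ℝ)) ^ (n - 2*m) ≠ 0 := pow_ne_zero _ two_ne_zero
    field_simp
end

section
/- The ratio C(αn, ℓ)/C(n, 2ℓ) is a decreasing function of ℓ for 1 ≤ ℓ ≤ αn with α ≤ 1/4, and satisfies C(αn, ℓ)/C(n, 2ℓ) ≤ 2^{O(ℓ)} · (ℓ/n)^ℓ. -/
/-!
Going from `ℓ` to `ℓ + 1` multiplies `C(m, ℓ)` by `(m - ℓ)/(ℓ + 1)` and `C(n, 2ℓ)` by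
`(n - 2ℓ)(n - 2ℓ - 1)/((2ℓ + 1)(2ℓ + 2))`; for `4m ≤ n` the second factor is the larger, so the
ratio decreases. For the bound, `C(m, ℓ) ≤ m^ℓ/ℓ!` and `C(n, 2ℓ) ≥ (n + 1 - 2ℓ)^{2ℓ}/(2ℓ)!` with
`n + 1 - 2ℓ ≥ n/2`, while `(2ℓ)! ≤ (2ℓ)^ℓ ℓ!`; with `4m ≤ n` this gives the ratio `≤ (2ℓ/n)^ℓ`.
-/

namespace Nat

variable {m n : ℕ}

theorem choose_add_two_mul_eq (n k : ℕ) :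
    n.choose (k + 2) * ((k + 1) * (k + 2)) = n.choose k * ((n - k) * (n - k - 1)) :=
  calc n.choose (k + 2) * ((k + 1) * (k + 2))
      = n.choose (k + 1 + 1) * (k + 1 + 1) * (k + 1) := by ring
    _ = n.choose k * ((n - k) * (n - k - 1)) := by
      rw [choose_succ_right_eq, mul_right_comm, choose_succ_right_eq, Nat.sub_add_eq]; ring

theorem choose_succ_mul_choose_le (hmn : 4 * m ≤ n) {ℓ : ℕ} (hℓ : ℓ < m) :
    m.choose (ℓ + 1) * n.choose (2 * ℓ) ≤ m.choose ℓ * n.choose (2 * (ℓ + 1)) := by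
  have growth : (m - ℓ) * ((2 * ℓ + 1) * (2 * ℓ + 2)) ≤
      (ℓ + 1) * ((n - 2 * ℓ) * (n - 2 * ℓ - 1)) :=
    calc (m - ℓ) * ((2 * ℓ + 1) * (2 * ℓ + 2))
        = (ℓ + 1) * (2 * (m - ℓ) * (2 * ℓ + 1)) := by ring
      _ ≤ (ℓ + 1) * ((n - 2 * ℓ) * (n - 2 * ℓ - 1)) :=
        Nat.mul_le_mul_left _ (Nat.mul_le_mul (by omega) (by omega))
  refine Nat.le_of_mul_le_mul_right ?_ (by positivity : 0 < (ℓ + 1) * ((2 * ℓ + 1) * (2 * ℓ + 2)))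
  calc m.choose (ℓ + 1) * n.choose (2 * ℓ) * ((ℓ + 1) * ((2 * ℓ + 1) * (2 * ℓ + 2)))
      = m.choose (ℓ + 1) * (ℓ + 1) * n.choose (2 * ℓ) * ((2 * ℓ + 1) * (2 * ℓ + 2)) := by ring
    _ = m.choose ℓ * n.choose (2 * ℓ) * ((m - ℓ) * ((2 * ℓ + 1) * (2 * ℓ + 2))) := by
      rw [choose_succ_right_eq]; ring
    _ ≤ m.choose ℓ * n.choose (2 * ℓ) * ((ℓ + 1) * ((n - 2 * ℓ) * (n - 2 * ℓ - 1))) :=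
      Nat.mul_le_mul_left _ growth
    _ = m.choose ℓ * (n.choose (2 * ℓ) * ((n - 2 * ℓ) * (n - 2 * ℓ - 1))) * (ℓ + 1) := by ring
    _ = m.choose ℓ * n.choose (2 * ℓ + 2) * ((ℓ + 1) * ((2 * ℓ + 1) * (2 * ℓ + 2))) := by
      rw [← choose_add_two_mul_eq]; ring

theorem antitoneOn_choose_div_choose_two_mul (hmn : 4 * m ≤ n) :
    AntitoneOn (fun ℓ ↦ (m.choose ℓ : ℝ) / n.choose (2 * ℓ)) (Set.Iic m) := by
  intro a _ b hb hab
  induction b, hab using Nat.le_induction with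
  | base => rfl
  | succ k _ ih =>
    have hk : k < m := hb
    refine le_trans ?_ (ih hk.le)
    rw [div_le_div_iff₀ (by exact_mod_cast choose_pos (by omega))
      (by exact_mod_cast choose_pos (by omega))]
    exact_mod_cast choose_succ_mul_choose_le hmn hk

theorem choose_mul_pow_le (hmn : 4 * m ≤ n) (ℓ : ℕ) :
    m.choose ℓ * n ^ ℓ ≤ (2 * ℓ) ^ ℓ * n.choose (2 * ℓ) := by
  rcases lt_or_ge m ℓ with hlt | hle
  · simp [choose_eq_zero_of_lt hlt]
  rcases ℓ.eq_zero_or_pos with rfl | hℓ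
  · simp
  have hn : 0 < n := by omega
  refine Nat.le_of_mul_le_mul_right ?_ (Nat.mul_pos (factorial_pos ℓ) (pow_pos hn ℓ))
  calc m.choose ℓ * n ^ ℓ * (ℓ ! * n ^ ℓ)
      = ℓ ! * m.choose ℓ * n ^ (2 * ℓ) := by ring
    _ ≤ m ^ ℓ * (2 * (n + 1 - 2 * ℓ)) ^ (2 * ℓ) := by
      gcongr
      · rw [← descFactorial_eq_factorial_mul_choose]; exact descFactorial_le_pow m ℓ
      · omega
    _ = (4 * m) ^ ℓ * (n + 1 - 2 * ℓ) ^ (2 * ℓ) := by rw [mul_pow, pow_mul, mul_pow]; ring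
    _ ≤ n ^ ℓ * ((2 * ℓ) ! * n.choose (2 * ℓ)) := by
      gcongr
      rw [← descFactorial_eq_factorial_mul_choose]; exact pow_sub_le_descFactorial n (2 * ℓ)
    _ ≤ n ^ ℓ * ((2 * ℓ) ^ ℓ * ℓ ! * n.choose (2 * ℓ)) := by gcongr; exact factorial_two_mul_le ℓ
    _ = (2 * ℓ) ^ ℓ * n.choose (2 * ℓ) * (ℓ ! * n ^ ℓ) := by ring

theorem choose_div_choose_two_mul_le (hn : 0 < n) (hmn : 4 * m ≤ n) (ℓ : ℕ) :
    (m.choose ℓ : ℝ) / n.choose (2 * ℓ) ≤ (2 * ℓ / n) ^ ℓ := by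
  rcases (n.choose (2 * ℓ)).eq_zero_or_pos with h0 | hpos
  · rw [h0, cast_zero, div_zero]; positivity
  rw [div_le_iff₀ (by exact_mod_cast hpos), div_pow, div_mul_eq_mul_div,
    le_div_iff₀ (by positivity)]
  exact_mod_cast choose_mul_pow_le hmn ℓ

end Nat

/-- For `m = αn` with `α ≤ 1/4`, the ratio `C(m,ℓ)/C(n,2ℓ)` is decreasing in `ℓ`
on `1 ≤ ℓ ≤ m`, and is at most `2^{cℓ} (ℓ/n)^ℓ` for a constant `c`. -/
theorem binom_ratio_decreasing_and_bound :
    ∃ c : ℝ, ∀ (n m : ℕ), 0 < n → 4 * m ≤ n →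
      (∀ ℓ₁ ℓ₂ : ℕ, 1 ≤ ℓ₁ → ℓ₁ ≤ ℓ₂ → ℓ₂ ≤ m →
        (m.choose ℓ₂ : ℝ) / (n.choose (2 * ℓ₂)) ≤
          (m.choose ℓ₁ : ℝ) / (n.choose (2 * ℓ₁))) ∧
      ∀ ℓ : ℕ, 1 ≤ ℓ → ℓ ≤ m →
        (m.choose ℓ : ℝ) / (n.choose (2 * ℓ)) ≤
          (2 : ℝ) ^ (c * ℓ) * ((ℓ : ℝ) / n) ^ ℓ := by
  refine ⟨1, fun n m hn hmn ↦ ⟨fun ℓ₁ ℓ₂ _ h₁₂ h₂ ↦ ?_, fun ℓ _ _ ↦ ?_⟩⟩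
  · exact Nat.antitoneOn_choose_div_choose_two_mul hmn (h₁₂.trans h₂) h₂ h₁₂
  · rw [one_mul, Real.rpow_natCast, ← mul_pow, mul_div_assoc']
    exact Nat.choose_div_choose_two_mul_le hn hmn ℓ
end
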